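/- For every A = (a c; b d) ∈ SL(2,ℝ), there is an algebra automorphism α_A of 𝒩 with α_A(K) = K, α_A(θ) = aθ + bθ̄, α_A(θ̄) = cθ + dθ̄, and this α_A is a Hopf algebra automorphism of 𝒩: Δ∘α_A = (α_A⊗α_A)∘Δ, ε∘α_A = ε, S∘α_A = α_A∘S. Moreover α_A(ρ) = ρ (hence α_A(v) = v for the ribbon element v = 1+ρ), α_A(λ₀) = λ₀ for λ₀ = (1+K)ρ, μ₀∘α_A = μ₀, and (α_A⊗α_A)(ℳ) = ℳ. -/

import Mathlib

noncomputable section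

open TensorProduct

/-- The quadratic form `q(x₀,x₁,x₂) = x₀²` on `ℝ³`. -/
def Nform : QuadraticForm ℝ (Fin 3 → ℝ) :=
  QuadraticMap.weightedSumSquares ℝ (fun i : Fin 3 => if i = 0 then (1 : ℝ) else 0)

/-- The algebra `𝒩 = ℤ/2 ⋉ Λ*ℝ²`, realized as the Clifford algebra of `Nform`. -/
abbrev NA := CliffordAlgebra Nform

/-- The generator `K`. -/
def K : NA := CliffordAlgebra.ι Nform (Pi.single 0 1)

/-- The generator `θ`. -/
def θ : NA := CliffordAlgebra.ι Nform (Pi.single 1 1)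

/-- The generator `θ̄`. -/
def θb : NA := CliffordAlgebra.ι Nform (Pi.single 2 1)

/-- `ρ := θ̄θ`. -/
def ρ : NA := θb * θ

/-- The monodromy element `ℳ = 1⊗1 + Kθ̄⊗θ + θK⊗θ̄ − ρ⊗ρ`. -/
def Mono : NA ⊗[ℝ] NA := 1 + (K * θb) ⊗ₜ[ℝ] θ + (θ * K) ⊗ₜ[ℝ] θb - ρ ⊗ₜ[ℝ] ρ


lemma Nform_apply (v : Fin 3 → ℝ) : Nform v = v 0 * v 0 := by
  rw [Nform, QuadraticMap.weightedSumSquares_apply]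
  simp [Fin.sum_univ_three]

lemma single_expand (v : Fin 3 → ℝ) :
    v = v 0 • (Pi.single 0 1 : Fin 3 → ℝ) + v 1 • (Pi.single 1 1 : Fin 3 → ℝ)
      + v 2 • (Pi.single 2 1 : Fin 3 → ℝ) := by
  funext i; fin_cases i <;> simp

lemma KK : K * K = 1 := by
  rw [K, CliffordAlgebra.ι_sq_scalar, Nform_apply]; simp

lemma θθ : θ * θ = 0 := by
  rw [θ, CliffordAlgebra.ι_sq_scalar, Nform_apply]; simp

lemma θbθb : θb * θb = 0 := by
  rw [θb, CliffordAlgebra.ι_sq_scalar, Nform_apply]; simp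

lemma anticomm (i j : Fin 3) (h : i ≠ j) :
    CliffordAlgebra.ι Nform (Pi.single i 1) * CliffordAlgebra.ι Nform (Pi.single j 1)
      = -(CliffordAlgebra.ι Nform (Pi.single j 1) * CliffordAlgebra.ι Nform (Pi.single i 1)) := by
  have hp : QuadraticMap.polar Nform (Pi.single i 1) (Pi.single j 1) = 0 := by
    rw [QuadraticMap.polar]
    simp only [Nform_apply, Pi.add_apply]
    rcases eq_or_ne i 0 with hi | hi
    · subst hi
      have hj : (Pi.single j 1 : Fin 3 → ℝ) 0 = 0 := Pi.single_eq_of_ne h 1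
      simp [hj]
    · have hi' : (Pi.single i 1 : Fin 3 → ℝ) 0 = 0 := Pi.single_eq_of_ne (Ne.symm hi) 1
      simp [hi']
  have h2 := CliffordAlgebra.ι_mul_ι_add_swap (Q := Nform) (Pi.single i 1) (Pi.single j 1)
  rw [hp, map_zero] at h2
  exact eq_neg_of_add_eq_zero_left h2

lemma θK : θ * K = -(K * θ) := anticomm 1 0 (by decide)
lemma θbK : θb * K = -(K * θb) := anticomm 2 0 (by decide)
lemma θθb : θ * θb = -(θb * θ) := anticomm 1 2 (by decide)

lemma KKm (x : NA) : K * (K * x) = x := by rw [← mul_assoc, KK, one_mul]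
lemma θθm (x : NA) : θ * (θ * x) = 0 := by rw [← mul_assoc, θθ, zero_mul]
lemma θbθbm (x : NA) : θb * (θb * x) = 0 := by rw [← mul_assoc, θbθb, zero_mul]
lemma θKm (x : NA) : θ * (K * x) = -(K * (θ * x)) := by
  rw [← mul_assoc, θK, neg_mul, mul_assoc]
lemma θbKm (x : NA) : θb * (K * x) = -(K * (θb * x)) := by
  rw [← mul_assoc, θbK, neg_mul, mul_assoc]
lemma θθbm (x : NA) : θ * (θb * x) = -(θb * (θ * x)) := by
  rw [← mul_assoc, θθb, neg_mul, mul_assoc]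

def Sset : Set NA := {1, θ, θb, θb * θ, K, K * θ, K * θb, K * (θb * θ)}

set_option maxHeartbeats 2000000 in
lemma mul_S_mem : ∀ y ∈ Sset, ∀ x ∈ Sset, x * y ∈ Submodule.span ℝ Sset := by
  intro y hy x hx
  simp only [Sset, Set.mem_insert_iff, Set.mem_singleton_iff] at hx hy
  rcases hx with rfl|rfl|rfl|rfl|rfl|rfl|rfl|rfl <;>
    rcases hy with rfl|rfl|rfl|rfl|rfl|rfl|rfl|rfl <;>
    (try simp only [KK, θθ, θbθb, θK, θbK, θθb, KKm, θθm, θbθbm, θKm, θbKm, θθbm,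
      mul_assoc, mul_one, one_mul, mul_neg, neg_mul, neg_neg, mul_zero, zero_mul, neg_zero]) <;>
    first
      | exact zero_mem _
      | (apply Submodule.subset_span;
         simp only [Sset, Set.mem_insert_iff, Set.mem_singleton_iff]; tauto)
      | (apply Submodule.neg_mem; apply Submodule.subset_span;
         simp only [Sset, Set.mem_insert_iff, Set.mem_singleton_iff]; tauto)

lemma mul_mem_span : ∀ y ∈ Submodule.span ℝ Sset, ∀ x ∈ Submodule.span ℝ Sset,
    x * y ∈ Submodule.span ℝ Sset := by
  intro y hy
  induction hy using Submodule.span_induction with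
  | mem y hy =>
      intro x hx
      induction hx using Submodule.span_induction with
      | mem x hx => exact mul_S_mem y hy x hx
      | zero => rw [zero_mul]; exact zero_mem _
      | add a b _ _ ha hb => rw [add_mul]; exact add_mem ha hb
      | smul r a _ ha => rw [smul_mul_assoc]; exact Submodule.smul_mem _ r ha
  | zero => intro x hx; rw [mul_zero]; exact zero_mem _
  | add a b _ _ ha hb => intro x hx; rw [mul_add]; exact add_mem (ha x hx) (hb x hx)
  | smul r a _ ha => intro x hx; rw [mul_smul_comm]; exact Submodule.smul_mem _ r (ha x hx)

lemma ι_expand (v : Fin 3 → ℝ) :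
    CliffordAlgebra.ι Nform v = v 0 • K + v 1 • θ + v 2 • θb := by
  conv_lhs => rw [single_expand v]
  simp only [map_add, map_smul, K, θ, θb]

lemma span_top (x : NA) : x ∈ Submodule.span ℝ Sset := by
  induction x using CliffordAlgebra.induction with
  | algebraMap r =>
      rw [Algebra.algebraMap_eq_smul_one]
      exact Submodule.smul_mem _ _ (Submodule.subset_span (by simp [Sset]))
  | ι v =>
      rw [ι_expand]
      refine add_mem (add_mem ?_ ?_) ?_ <;>
        exact Submodule.smul_mem _ _ (Submodule.subset_span (by
          simp only [Sset, Set.mem_insert_iff, Set.mem_singleton_iff]; tauto))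
  | mul a b ha hb => exact mul_mem_span b hb a ha
  | add a b ha hb => exact add_mem ha hb

section construction

variable (a b c d : ℝ)

def Mmat : Matrix (Fin 3) (Fin 3) ℝ := !![1,0,0; 0,a,c; 0,b,d]

lemma Mmat_mul (h : a * d - c * b = 1) :
    Mmat a b c d * Mmat d (-b) (-c) a = 1 := by
  ext i j
  fin_cases i <;> fin_cases j <;>
    simp [Mmat, Matrix.mul_apply, Fin.sum_univ_three, Matrix.one_apply,
      Matrix.vecHead, Matrix.vecTail] <;> linarith

variable (h : a * d - c * b = 1)

def isom : Nform.IsometryEquiv Nform where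
  toLinearEquiv := LinearEquiv.ofLinear (Matrix.toLin' (Mmat a b c d))
    (Matrix.toLin' (Mmat d (-b) (-c) a))
    (by rw [← Matrix.toLin'_mul, Mmat_mul a b c d h, Matrix.toLin'_one])
    (by
      rw [← Matrix.toLin'_mul]
      have h2 : Mmat d (-b) (-c) a * Mmat a (- -b) (- -c) d = 1 :=
        Mmat_mul d (-b) (-c) a (by ring_nf; linarith)
      simp only [neg_neg] at h2
      rw [h2, Matrix.toLin'_one])
  map_app' m := by
    have h0 : (Matrix.toLin' (Mmat a b c d)) m 0 = m 0 := by
      simp [Mmat, Matrix.toLin'_apply, Matrix.mulVec, dotProduct, Fin.sum_univ_three]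
    simp only [Nform_apply]
    show (Matrix.toLin' (Mmat a b c d)) m 0 * (Matrix.toLin' (Mmat a b c d)) m 0 = m 0 * m 0
    rw [h0]

def alg : NA ≃ₐ[ℝ] NA := CliffordAlgebra.equivOfIsometry (isom a b c d h)

lemma alg_ι (v : Fin 3 → ℝ) :
    alg a b c d h (CliffordAlgebra.ι Nform v)
      = CliffordAlgebra.ι Nform (Matrix.toLin' (Mmat a b c d) v) := by
  rw [alg, CliffordAlgebra.equivOfIsometry_apply, CliffordAlgebra.map_apply_ι]
  rfl

lemma alg_K : alg a b c d h K = K := by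
  rw [K, alg_ι]
  congr 1
  funext i
  fin_cases i <;> simp [Mmat, Matrix.toLin'_apply, Matrix.mulVec, dotProduct,
    Fin.sum_univ_three, Pi.single_apply]

lemma alg_θ : alg a b c d h θ = a • θ + b • θb := by
  rw [θ, θb, alg_ι, ← map_smul, ← map_smul, ← map_add]
  congr 1
  funext i
  fin_cases i <;> simp [Mmat, Matrix.toLin'_apply, Matrix.mulVec, dotProduct,
    Fin.sum_univ_three, Pi.single_apply]

lemma alg_θb : alg a b c d h θb = c • θ + d • θb := by
  rw [θ, θb, alg_ι, ← map_smul, ← map_smul, ← map_add]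
  congr 1
  funext i
  fin_cases i <;> simp [Mmat, Matrix.toLin'_apply, Matrix.mulVec, dotProduct,
    Fin.sum_univ_three, Pi.single_apply]

lemma alg_ρ : alg a b c d h ρ = ρ := by
  rw [ρ, map_mul, alg_θb, alg_θ]
  rw [add_mul, mul_add, mul_add, smul_mul_assoc, smul_mul_assoc, smul_mul_assoc,
    smul_mul_assoc, mul_smul_comm, mul_smul_comm, mul_smul_comm, mul_smul_comm,
    θθ, θbθb, θθb, smul_zero, smul_zero, smul_zero, smul_zero, add_zero, zero_add]
  simp only [smul_neg, smul_smul]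
  rw [← neg_smul, ← add_smul]
  have : -(c * b) + d * a = 1 := by linarith
  rw [this, one_smul]

end construction

/-- for every `A = (a c; b d) ∈ SL(2,ℝ)` there is an algebra automorphism
`α` of `𝒩` with `α(K) = K`, `α(θ) = aθ + bθ̄`, `α(θ̄) = cθ + dθ̄`, and `α` is a Hopf
algebra automorphism: `Δ∘α = (α⊗α)∘Δ`, `ε∘α = ε`, `S∘α = α∘S`.  Moreover `α(ρ) = ρ`
(hence `α(v) = v` for `v = 1+ρ`), `α(λ₀) = λ₀` for `λ₀ = (1+K)ρ`, `μ₀∘α = μ₀`, and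
`(α⊗α)(ℳ) = ℳ`. -/
theorem stmt10
    (Δ : NA →ₐ[ℝ] NA ⊗[ℝ] NA)
    (hΔK : Δ K = K ⊗ₜ[ℝ] K)
    (hΔθ : Δ θ = θ ⊗ₜ[ℝ] 1 + K ⊗ₜ[ℝ] θ)
    (hΔθb : Δ θb = θb ⊗ₜ[ℝ] 1 + K ⊗ₜ[ℝ] θb)
    (ε : NA →ₐ[ℝ] ℝ) (hεK : ε K = 1) (hεθ : ε θ = 0) (hεθb : ε θb = 0)
    (S : NA →ₗ[ℝ] NA) (hS1 : S 1 = 1) (hSmul : ∀ x y : NA, S (x * y) = S y * S x)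
    (hSK : S K = K) (hSθ : S θ = -(K * θ)) (hSθb : S θb = -(K * θb))
    (μ₀ : NA →ₗ[ℝ] ℝ)
    (hμ1 : μ₀ 1 = 0) (hμθ : μ₀ θ = 0) (hμθb : μ₀ θb = 0) (hμρ : μ₀ ρ = 1)
    (hμK : μ₀ K = 0) (hμKθ : μ₀ (K * θ) = 0) (hμKθb : μ₀ (K * θb) = 0)
    (hμKρ : μ₀ (K * ρ) = 0)
    (A : Matrix.SpecialLinearGroup (Fin 2) ℝ) :
    ∃ α : NA ≃ₐ[ℝ] NA,
      α K = K ∧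
      α θ = (A : Matrix (Fin 2) (Fin 2) ℝ) 0 0 • θ
              + (A : Matrix (Fin 2) (Fin 2) ℝ) 1 0 • θb ∧
      α θb = (A : Matrix (Fin 2) (Fin 2) ℝ) 0 1 • θ
              + (A : Matrix (Fin 2) (Fin 2) ℝ) 1 1 • θb ∧
      (∀ x : NA, Δ (α x)
          = (Algebra.TensorProduct.map α.toAlgHom α.toAlgHom) (Δ x)) ∧
      (∀ x : NA, ε (α x) = ε x) ∧
      (∀ x : NA, S (α x) = α (S x)) ∧
      α ρ = ρ ∧ α (1 + ρ) = 1 + ρ ∧ α ((1 + K) * ρ) = (1 + K) * ρ ∧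
      (∀ x : NA, μ₀ (α x) = μ₀ x) ∧
      (Algebra.TensorProduct.map α.toAlgHom α.toAlgHom) Mono = Mono := by
  have hdet : (A : Matrix (Fin 2) (Fin 2) ℝ) 0 0 * (A : Matrix (Fin 2) (Fin 2) ℝ) 1 1
      - (A : Matrix (Fin 2) (Fin 2) ℝ) 0 1 * (A : Matrix (Fin 2) (Fin 2) ℝ) 1 0 = 1 := by
    have h2 := A.2
    rw [Matrix.det_fin_two] at h2
    exact h2
  set a := (A : Matrix (Fin 2) (Fin 2) ℝ) 0 0 with ha
  set b := (A : Matrix (Fin 2) (Fin 2) ℝ) 1 0 with hb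
  set c := (A : Matrix (Fin 2) (Fin 2) ℝ) 0 1 with hc
  set d := (A : Matrix (Fin 2) (Fin 2) ℝ) 1 1 with hd
  refine ⟨alg a b c d hdet, alg_K a b c d hdet, alg_θ a b c d hdet, alg_θb a b c d hdet,
    ?_, ?_, ?_, alg_ρ a b c d hdet, ?_, ?_, ?_, ?_⟩
  · -- Δ compatibility
    intro x
    induction x using CliffordAlgebra.induction with
    | algebraMap r => simp
    | ι v =>
        rw [ι_expand]
        simp only [map_add, map_smul, alg_K, alg_θ, alg_θb, hΔK, hΔθ, hΔθb,
          Algebra.TensorProduct.map_tmul, AlgEquiv.toAlgHom_eq_coe, AlgHom.coe_coe, AlgEquiv.coe_toAlgHom, map_one]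
        simp only [TensorProduct.add_tmul, TensorProduct.tmul_add, TensorProduct.smul_tmul',
          TensorProduct.tmul_smul, smul_add, smul_smul]
        module
    | mul x y hx hy => simp only [map_mul, hx, hy]
    | add x y hx hy => simp only [map_add, hx, hy]
  · -- ε compatibility
    intro x
    induction x using CliffordAlgebra.induction with
    | algebraMap r => simp
    | ι v =>
        rw [ι_expand]
        simp [alg_K, alg_θ, alg_θb, hεK, hεθ, hεθb]
    | mul x y hx hy => simp only [map_mul, hx, hy]
    | add x y hx hy => simp only [map_add, hx, hy]
  · -- S compatibility
    intro x
    induction x using CliffordAlgebra.induction with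
    | algebraMap r =>
        rw [Algebra.algebraMap_eq_smul_one]
        simp [hS1]
    | ι v =>
        rw [ι_expand]
        simp only [map_add, map_smul, alg_K, alg_θ, alg_θb, hSK, hSθ, hSθb,
          map_neg, map_mul, mul_add, mul_smul_comm, smul_neg, smul_add, smul_smul]
        module
    | mul x y hx hy =>
        rw [map_mul, hSmul, hx, hy, ← map_mul, ← hSmul]
    | add x y hx hy => simp only [map_add, hx, hy]
  · rw [map_add, map_one, alg_ρ]
  · rw [map_mul, map_add, map_one, alg_K, alg_ρ]
  · -- μ₀ invariance
    intro x
    have hx := span_top x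
    induction hx using Submodule.span_induction with
    | mem s hs =>
        simp only [Sset, Set.mem_insert_iff, Set.mem_singleton_iff] at hs
        rcases hs with rfl|rfl|rfl|rfl|rfl|rfl|rfl|rfl
        · rw [map_one]
        · rw [alg_θ]; simp [hμθ, hμθb]
        · rw [alg_θb]; simp [hμθ, hμθb]
        · rw [show θb * θ = ρ from rfl, alg_ρ]
        · rw [alg_K]
        · rw [map_mul, alg_K, alg_θ, mul_add, mul_smul_comm, mul_smul_comm]
          simp [hμKθ, hμKθb]
        · rw [map_mul, alg_K, alg_θb, mul_add, mul_smul_comm, mul_smul_comm]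
          simp [hμKθ, hμKθb]
        · rw [show K * (θb * θ) = K * ρ from rfl, map_mul, alg_K, alg_ρ]
    | zero => rw [map_zero]
    | add x y _ _ hx hy => simp only [map_add, hx, hy]
    | smul r x _ hx => simp only [map_smul, hx]
  · -- monodromy invariance
    unfold Mono
    simp only [map_sub, map_add, map_one, Algebra.TensorProduct.map_tmul,
      AlgEquiv.toAlgHom_eq_coe, AlgHom.coe_coe, AlgEquiv.coe_toAlgHom, map_mul, alg_K, alg_θ, alg_θb, alg_ρ]
    simp only [mul_add, add_mul, mul_smul_comm, smul_mul_assoc, θK, θbK, smul_neg, neg_mul]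
    simp only [TensorProduct.add_tmul, TensorProduct.tmul_add, ← TensorProduct.smul_tmul',
      TensorProduct.tmul_smul, TensorProduct.neg_tmul, TensorProduct.tmul_neg,
      smul_smul, smul_add, smul_neg]
    match_scalars <;>
      first
        | ring1
        | linear_combination -hdet
        | linear_combination (-2 : ℝ) * hdet
        | linear_combination hdet
        | linear_combination (2 : ℝ) * hdet
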